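/- Let S = {±a_1,…,±a_n} where 0 < a_1 < … < a_n and gcd(a_1,…,a_n) = 1, and let k ≥ 1. There exists a Borel proper k-coloring of the Schreier graph G_S on F(2^ℤ) if and only if there exist integers p, q > a_n + 1 with gcd(p,q) = 1 and functions y_1, y_2 : ℤ → Fin k such that y_1(m+p) = y_1(m) and y_2(m+q) = y_2(m) for all m ∈ ℤ, both y_1 and y_2 are proper S-colorations, and y_1(i) = y_2(i) for all 0 ≤ i ≤ a_n. -/

import Mathlib

/-!
Let `N = max A`. A Borel colouring `c` assigns to every free point `x` the word
`c(x), c(1 · x), …, c(N · x)`. Countably many Borel sets, one per word, cover the comeagre free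
part, so some word `b` is read on a non-meagre Borel set `B`. Since the shift is topologically
mixing, Baire category gives a point of `B` whose `t`-shift is again in `B`, for every large `t`.
Along that orbit `b` is read at `0` and at `t`, so repeating the first `t` colours of the orbit
gives a `t`-periodic proper colouration starting with `b`. Take periods `t` and `t + 1`.

Conversely, let `D ≥ pq`. Take a Borel maximal set of markers no two of which lie within distance
`D` on an orbit, built greedily along a countable Borel colouring. Each gap between consecutive
markers has length `g = αp + βq` and is filled with `α` periods of `y₁` followed by `β` periods of
`y₂`. All these patterns start with the same word `y₁(0), …, y₁(N)`, and this word is also how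
each pattern continues past its gap. So the concatenation stays proper across the markers.
-/

/-- The shift action of `ℤ` on `α^ℤ`: `(s · x)(n) = x(n + s)`. -/
def shift {α : Type*} (s : ℤ) (x : ℤ → α) : ℤ → α := fun n => x (n + s)

/-- The free part `F(2^ℤ)` of the shift action on `2^ℤ = (ℤ → Bool)`. -/
def FreePart : Set (ℤ → Bool) := {x | ∀ s : ℤ, s ≠ 0 → shift s x ≠ x}

/-- `c` is a Borel proper coloring of the Schreier graph `G_S` on `F(2^ℤ)`,
where `S = {±a : a ∈ A}`: `c` is Borel and `c(x) ≠ c(s · x)` for all `x` and `s ∈ S`. -/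
def IsBorelColoring (A : Finset ℕ) {k : ℕ}
    (c : {x : ℤ → Bool // x ∈ FreePart} → Fin k) : Prop :=
  Measurable c ∧
    ∀ (x : {x : ℤ → Bool // x ∈ FreePart}) (a : ℕ), a ∈ A →
      ∀ (h : shift (a : ℤ) x.1 ∈ FreePart), c x ≠ c ⟨shift (a : ℤ) x.1, h⟩

/-- The Borel chromatic number `χ(a₁, …, aₙ)` of the Schreier graph `G_S` on `F(2^ℤ)`,
where `S = {±a : a ∈ A}`: the least `k` admitting a Borel proper `k`-coloring. -/
noncomputable def borelChromatic (A : Finset ℕ) : ℕ :=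
  sInf {k : ℕ | ∃ c : {x : ℤ → Bool // x ∈ FreePart} → Fin k, IsBorelColoring A c}

open Function Set Filter Topology MeasureTheory

section Shift

variable {α : Type*}

lemma shift_shift (s t : ℤ) (x : ℤ → α) : shift s (shift t x) = shift (s + t) x := by
  funext n
  simp only [shift, add_assoc]

lemma shift_zero (x : ℤ → α) : shift 0 x = x := by
  funext n
  simp [shift]

lemma continuous_shift [TopologicalSpace α] (t : ℤ) : Continuous (shift (α := α) t) :=
  continuous_pi fun n => continuous_apply (n + t)

lemma measurable_shift [MeasurableSpace α] (t : ℤ) : Measurable (shift (α := α) t) :=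
  measurable_pi_lambda _ fun n => measurable_pi_apply (n + t)

def shiftHomeomorph [TopologicalSpace α] (t : ℤ) : (ℤ → α) ≃ₜ (ℤ → α) where
  toFun := shift t
  invFun := shift (-t)
  left_inv x := by simp [shift_shift, shift_zero]
  right_inv x := by simp [shift_shift, shift_zero]
  continuous_toFun := continuous_shift t
  continuous_invFun := continuous_shift (-t)

lemma isClosed_setOf_shift_eq [TopologicalSpace α] [T2Space α] (s : ℤ) :
    IsClosed {x : ℤ → α | shift s x = x} :=
  isClosed_eq (continuous_shift s) continuous_id

lemma exists_finset_forall_eq_mem {ι : Type*} [TopologicalSpace α] {U : Set (ι → α)}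
    (hU : IsOpen U) {x₀ : ι → α} (hx₀ : x₀ ∈ U) :
    ∃ I : Finset ι, ∀ y, (∀ i ∈ I, y i = x₀ i) → y ∈ U := by
  obtain ⟨I, u, hu, hIU⟩ := isOpen_pi_iff.1 hU x₀ hx₀
  exact ⟨I, fun y hy => hIU fun i hi => hy i hi ▸ (hu i hi).2⟩

lemma exists_nonempty_inter_preimage_shift [TopologicalSpace α] {U : Set (ℤ → α)}
    (hU : IsOpen U) (hne : U.Nonempty) :
    ∃ L : ℕ, ∀ t : ℤ, L < t.natAbs → (U ∩ shift t ⁻¹' U).Nonempty := by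
  obtain ⟨x₀, hx₀⟩ := hne
  obtain ⟨I, hI⟩ := exists_finset_forall_eq_mem hU hx₀
  have hb : ∀ i ∈ I, i.natAbs ≤ I.sup Int.natAbs := fun i hi => Finset.le_sup hi
  refine ⟨2 * I.sup Int.natAbs, fun t ht =>
    ⟨fun m => if m ∈ I then x₀ m else x₀ (m - t), hI _ fun i hi => if_pos hi, hI _ fun i hi => ?_⟩⟩
  have : i + t ∉ I := fun h => by
    have := hb _ h
    have := hb _ hi
    omega
  simp [shift, this]

lemma exists_mem_and_apply_mem {X : Type*} [TopologicalSpace X] [BaireSpace X] {f : X → X}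
    (hf : Continuous f) (hfo : IsOpenMap f) {B U : Set X} (hU : IsOpen U) (hBU : B =ᵇ U)
    (hne : (U ∩ f ⁻¹' U).Nonempty) : ∃ x ∈ B, f x ∈ B := by
  have h : (B ∩ f ⁻¹' B : Set X) =ᵇ (U ∩ f ⁻¹' U : Set X) :=
    hBU.inter (hBU.comp_tendsto (tendsto_residual_of_isOpenMap hf hfo))
  obtain ⟨x, hxU, hx⟩ :=
    (dense_of_mem_residual h).inter_open_nonempty _ (hU.inter (hU.preimage hf)) hne
  have hxB : x ∈ B ∩ f ⁻¹' B := Eq.mpr hx hxU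
  exact ⟨x, hxB.1, hxB.2⟩

lemma exists_shift_mem_of_not_isMeagre [TopologicalSpace α] [BaireSpace (ℤ → α)]
    {B : Set (ℤ → α)} (hB : BaireMeasurableSet B) (hnm : ¬IsMeagre B) :
    ∃ L : ℕ, ∀ t : ℤ, L < t.natAbs → ∃ x ∈ B, shift t x ∈ B := by
  obtain ⟨U, hU, hBU⟩ := hB.residualEq_isOpen
  have hUne : U.Nonempty := nonempty_of_not_isMeagre fun hUm =>
    hnm (mem_of_superset (inter_mem hUm hBU) fun x ⟨hxU, hx⟩ hxB => hxU (Eq.mp hx hxB))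
  obtain ⟨L, hL⟩ := exists_nonempty_inter_preimage_shift hU hUne
  exact ⟨L, fun t ht => exists_mem_and_apply_mem (continuous_shift t)
    (shiftHomeomorph t).isOpenMap hU hBU (hL t ht)⟩

end Shift

section FreePart

lemma shift_mem_freePart {x : ℤ → Bool} (hx : x ∈ FreePart) (t : ℤ) : shift t x ∈ FreePart :=
  fun s hs h => hx s hs <| funext fun n => by
    simpa [shift, add_right_comm] using congrFun h (n - t)

lemma dense_compl_setOf_shift_eq {s : ℤ} (hs : s ≠ 0) : Dense {x : ℤ → Bool | shift s x = x}ᶜ := by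
  refine dense_iff_inter_open.2 fun U hU ⟨x₀, hx₀⟩ => ?_
  obtain ⟨I, hI⟩ := exists_finset_forall_eq_mem hU hx₀
  set n : ℤ := I.sup Int.natAbs + s.natAbs + 1 with hn_def
  have hn : n ∉ I := fun h => by
    have := Finset.le_sup (f := Int.natAbs) h
    omega
  have hns : n + s ∉ I := fun h => by
    have := Finset.le_sup (f := Int.natAbs) h
    omega
  refine ⟨fun m => if m ∈ I then x₀ m else decide (m = n), hI _ fun i hi => if_pos hi, fun h => ?_⟩
  have := congrFun h n
  simp [shift, hn, hns, hs] at this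

lemma freePart_eq_iInter : FreePart = ⋂ s : {s : ℤ // s ≠ 0}, {x | shift s x = x}ᶜ := by
  ext x
  simp [FreePart]

lemma freePart_mem_residual : FreePart ∈ residual (ℤ → Bool) := by
  rw [freePart_eq_iInter, countable_iInter_mem]
  exact fun s => residual_of_dense_open (isClosed_setOf_shift_eq s.1).isOpen_compl
    (dense_compl_setOf_shift_eq s.2)

lemma measurableSet_freePart : MeasurableSet FreePart := by
  rw [freePart_eq_iInter]
  exact .iInter fun s => (isClosed_setOf_shift_eq s.1).measurableSet.compl

instance : AddAction ℤ FreePart where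
  vadd t x := ⟨shift t x, shift_mem_freePart x.2 t⟩
  zero_vadd x := Subtype.ext (shift_zero x.1)
  add_vadd s t x := Subtype.ext (shift_shift s t x.1).symm

instance : MeasurableConstVAdd ℤ FreePart :=
  ⟨fun t => ((measurable_shift t).comp measurable_subtype_coe).subtype_mk⟩

lemma vadd_ne_self_of_ne_zero {t : ℤ} (ht : t ≠ 0) (x : FreePart) : t +ᵥ x ≠ x :=
  fun h => x.2 t ht (congrArg Subtype.val h)

theorem exists_eq_and_vadd_eq_of_measurable {β : Type*} [Countable β] [MeasurableSpace β]
    [MeasurableSingletonClass β] {W : FreePart → β} (hW : Measurable W) :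
    ∃ b, ∃ L : ℕ, ∀ t : ℤ, L < t.natAbs → ∃ x, W x = b ∧ W (t +ᵥ x) = b := by
  let B : β → Set (ℤ → Bool) := fun b => Subtype.val '' (W ⁻¹' {b})
  have hcover : FreePart ⊆ ⋃ b, B b := fun x hx => mem_iUnion.2 ⟨W ⟨x, hx⟩, ⟨x, hx⟩, rfl, rfl⟩
  obtain ⟨b, hb⟩ : ∃ b, ¬IsMeagre (B b) := by
    by_contra! h
    exact not_isMeagre_of_mem_residual freePart_mem_residual ((isMeagre_iUnion h).mono hcover)
  obtain ⟨L, hL⟩ := exists_shift_mem_of_not_isMeagre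
    (measurableSet_freePart.subtype_image (hW (measurableSet_singleton b))).baireMeasurableSet hb
  refine ⟨b, L, fun t ht => ?_⟩
  obtain ⟨_, ⟨x, hx, rfl⟩, y, hy, hxy⟩ := hL t ht
  exact ⟨x, hx, by rwa [show t +ᵥ x = y from Subtype.ext hxy.symm]⟩

end FreePart

section Coloration

variable {α : Type*} {A : Finset ℕ} {N : ℕ}

def IsProperColoration (A : Finset ℕ) (y : ℤ → α) : Prop :=
  ∀ m m' : ℤ, (m - m').natAbs ∈ A → y m ≠ y m'

lemma isProperColoration_iff_add {y : ℤ → α} :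
    IsProperColoration A y ↔ ∀ n : ℤ, ∀ a ∈ A, y (n + a) ≠ y n := by
  refine ⟨fun h n a ha => h _ _ (by simpa using ha), fun h m m' hA => ?_⟩
  rcases Int.natAbs_eq (m - m') with e | e
  · rw [show m = m' + (m - m').natAbs by omega]
    exact h _ _ hA
  · rw [show m' = m + (m - m').natAbs by omega]
    exact (h _ _ hA).symm

lemma IsBorelColoring.isProperColoration_orbit {k : ℕ} {c : FreePart → Fin k}
    (hc : IsBorelColoring A c) (x : FreePart) : IsProperColoration A fun n : ℤ => c (n +ᵥ x) :=
  isProperColoration_iff_add.2 fun n a ha => by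
    rw [add_comm, add_vadd]
    exact (hc.2 (n +ᵥ x) a ha ((a : ℤ) +ᵥ n +ᵥ x).2).symm

lemma IsProperColoration.exists_periodic {u : ℤ → α} (hu : IsProperColoration A u)
    (hAN : ∀ a ∈ A, a ≤ N) {p : ℕ} (hNp : N < p) (hrep : ∀ i : ℕ, i ≤ N → u (i + p) = u i) :
    ∃ y : ℤ → α, Periodic y p ∧ IsProperColoration A y ∧ ∀ i : ℤ, 0 ≤ i → i < p → y i = u i := by
  have hp : (0 : ℤ) < p := by omega
  set y : ℤ → α := fun m => u (m % p)
  have hy : Periodic y p := fun m => by simp [y]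
  have hyu : ∀ i : ℤ, 0 ≤ i → i < p → y i = u i := fun i h0 hi => by
    simp only [y, Int.emod_eq_of_lt h0 hi]
  have hwin : ∀ r a : ℤ, 0 ≤ r → r < p → 0 ≤ a → a ≤ N → y (r + a) = u (r + a) := by
    intro r a hr hrp ha haN
    rcases lt_or_ge (r + a) p with h | h
    · exact hyu _ (by omega) h
    · rw [← hy.sub_eq, hyu _ (by omega) (by omega)]
      have := hrep (r + a - p).toNat (by omega)
      rwa [Int.toNat_of_nonneg (by omega), sub_add_cancel, eq_comm] at this
  refine ⟨y, hy, isProperColoration_iff_add.2 fun n a ha => ?_, hyu⟩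
  have h0 := Int.emod_nonneg n hp.ne'
  have h1 := Int.emod_lt_of_pos n hp
  have hyn : y (n + a) = y (n % p + a) := by simp only [y, Int.emod_add_emod]
  rw [hyn, hwin _ _ h0 h1 (by positivity) (by exact_mod_cast hAN a ha)]
  exact isProperColoration_iff_add.1 hu _ a ha

theorem IsBorelColoring.exists_periodic_colorations {k : ℕ} {c : FreePart → Fin k}
    (hc : IsBorelColoring A c) (hAN : ∀ a ∈ A, a ≤ N) :
    ∃ L : ℕ, ∀ t t' : ℕ, L < t → L < t' → ∃ y₁ y₂ : ℤ → Fin k,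
      Periodic y₁ t ∧ Periodic y₂ t' ∧ IsProperColoration A y₁ ∧ IsProperColoration A y₂ ∧
        ∀ i : ℕ, i ≤ N → y₁ i = y₂ i := by
  obtain ⟨b, L, hL⟩ := exists_eq_and_vadd_eq_of_measurable
    (W := fun x (i : Fin (N + 1)) => c (((i : ℕ) : ℤ) +ᵥ x))
    (measurable_pi_lambda _ fun i => hc.1.comp (measurable_const_vadd _))
  have hper : ∀ t : ℕ, max L N < t → ∃ y : ℤ → Fin k,
      Periodic y t ∧ IsProperColoration A y ∧ ∀ i : Fin (N + 1), y (i : ℕ) = b i := by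
    intro t ht
    obtain ⟨x, hx, hxt⟩ := hL t (by omega)
    obtain ⟨y, hy, hyA, hyu⟩ := (hc.isProperColoration_orbit x).exists_periodic hAN
      (p := t) (by omega) fun i hi => by
        rw [add_vadd]
        exact (congrFun hxt ⟨i, by omega⟩).trans (congrFun hx ⟨i, by omega⟩).symm
    exact ⟨y, hy, hyA, fun i => (hyu i (by positivity) (by omega)).trans (congrFun hx i)⟩
  refine ⟨max L N, fun t t' ht ht' => ?_⟩
  obtain ⟨y₁, hy₁, hy₁A, hb₁⟩ := hper t ht
  obtain ⟨y₂, hy₂, hy₂A, hb₂⟩ := hper t' ht'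
  exact ⟨y₁, y₂, hy₁, hy₂, hy₁A, hy₂A,
    fun i hi => (hb₁ ⟨i, by omega⟩).trans (hb₂ ⟨i, by omega⟩).symm⟩

def splice (y₁ y₂ : ℤ → α) (s : ℤ) : ℤ → α := fun j => if j < s then y₁ j else y₂ (j - s)

lemma isProperColoration_splice (hAN : ∀ a ∈ A, a ≤ N) {y₁ y₂ : ℤ → α}
    (hy₁ : IsProperColoration A y₁) (hy₂ : IsProperColoration A y₂) {s : ℤ}
    (h : ∀ i : ℤ, 0 ≤ i → i < N → y₁ (s + i) = y₂ i) : IsProperColoration A (splice y₁ y₂ s) := by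
  rw [isProperColoration_iff_add] at *
  intro n a ha
  have haN : (a : ℤ) ≤ N := by exact_mod_cast hAN a ha
  simp only [splice]
  split_ifs with h₁ h₂ h₂
  · exact hy₁ n a ha
  · omega
  · rw [← h (n + a - s) (by omega) (by omega), add_sub_cancel]
    exact hy₁ n a ha
  · have := hy₂ (n - s) a ha
    rwa [sub_add_eq_add_sub] at this

lemma exists_eq_mul_add_mul_of_coprime {p q : ℕ} (hpq : p.Coprime q) {g : ℤ}
    (hg : (p * q : ℤ) ≤ g) : ∃ a b : ℕ, g = a * p + b * q := by
  lift g to ℕ using (by positivity : (0 : ℤ) ≤ p * q).trans hg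
  obtain ⟨a, b, h⟩ := Nat.exists_add_mul_eq_of_gcd_dvd_of_mul_pred_le p q g
    (by simp [hpq.gcd_eq_one]) ((Nat.mul_le_mul p.pred_le q.pred_le).trans (by exact_mod_cast hg))
  exact ⟨a, b, by exact_mod_cast h.symm⟩

theorem exists_gap_patterns (hAN : ∀ a ∈ A, a ≤ N) {p q : ℕ} (hpq : p.Coprime q)
    {y₁ y₂ : ℤ → α} (hy₁ : Periodic y₁ p) (hy₂ : Periodic y₂ q) (hy₁A : IsProperColoration A y₁)
    (hy₂A : IsProperColoration A y₂) (hy : ∀ i : ℕ, i ≤ N → y₁ i = y₂ i) :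
    ∃ w : ℤ → ℤ → α, ∀ g : ℤ, (p * q : ℤ) ≤ g →
      IsProperColoration A (w g) ∧
        ∀ i : ℤ, 0 ≤ i → i ≤ N → w g i = y₁ i ∧ w g (g + i) = y₁ i := by
  have hyZ : ∀ i : ℤ, 0 ≤ i → i ≤ N → y₁ i = y₂ i := fun i h0 hi => by
    lift i to ℕ using h0
    exact hy i (by exact_mod_cast hi)
  choose! a b hab using fun g (hg : (p * q : ℤ) ≤ g) => exists_eq_mul_add_mul_of_coprime hpq hg
  refine ⟨fun g => splice y₁ y₂ (a g * p), fun g hg => ?_⟩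
  have hper₁ := hy₁.nat_mul (a g)
  have hper₂ := hy₂.nat_mul (b g)
  have hs : (0 : ℤ) ≤ a g * p := by positivity
  have hbq : (0 : ℤ) ≤ b g * q := by positivity
  refine ⟨isProperColoration_splice hAN hy₁A hy₂A fun i h0 hi => ?_, fun i h0 hi => ⟨?_, ?_⟩⟩
  · rw [add_comm, hper₁, hyZ i h0 hi.le]
  · simp only [splice]
    split_ifs with h
    · rfl
    · rw [← hyZ _ (by omega) (by omega), hper₁.sub_eq]
  · simp only [splice]
    have hg' := hab g hg
    rw [if_neg (by omega), show g + i - a g * p = i + b g * q by omega, hper₂, hyZ i h0 hi]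

end Coloration

section Markers

variable {α : Type*}

-- `sSup` and `sInf` on `ℤ` are junk for unbounded or empty sets; `IsMarkerSet` excludes both.
noncomputable def prevMarker (Z : Set ℤ) (n : ℤ) : ℤ := sSup {z | z ∈ Z ∧ z ≤ n}

noncomputable def nextMarker (Z : Set ℤ) (n : ℤ) : ℤ := sInf {z | z ∈ Z ∧ n < z}

noncomputable def concatColoring (Z : Set ℤ) (w : ℤ → ℤ → α) (n : ℤ) : α :=
  w (nextMarker Z n - prevMarker Z n) (n - prevMarker Z n)

structure IsMarkerSet (D : ℕ) (Z : Set ℤ) : Prop where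
  exists_le : ∀ n, ∃ z ∈ Z, z ≤ n
  exists_gt : ∀ n, ∃ z ∈ Z, n < z
  lt_sub : ∀ z ∈ Z, ∀ z' ∈ Z, z < z' → (D : ℤ) < z' - z

namespace IsMarkerSet

variable {D : ℕ} {Z : Set ℤ}

lemma isGreatest_prevMarker (hZ : IsMarkerSet D Z) (n : ℤ) :
    IsGreatest {z | z ∈ Z ∧ z ≤ n} (prevMarker Z n) := by
  have hbdd : BddAbove {z | z ∈ Z ∧ z ≤ n} := ⟨n, fun z hz => hz.2⟩
  obtain ⟨z, hz, hzn⟩ := hZ.exists_le n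
  exact ⟨Int.csSup_mem ⟨z, hz, hzn⟩ hbdd, fun m hm => le_csSup hbdd hm⟩

lemma isLeast_nextMarker (hZ : IsMarkerSet D Z) (n : ℤ) :
    IsLeast {z | z ∈ Z ∧ n < z} (nextMarker Z n) := by
  have hbdd : BddBelow {z | z ∈ Z ∧ n < z} := ⟨n, fun z hz => hz.2.le⟩
  obtain ⟨z, hz, hnz⟩ := hZ.exists_gt n
  exact ⟨Int.csInf_mem ⟨z, hz, hnz⟩ hbdd, fun m hm => csInf_le hbdd hm⟩

lemma prevMarker_eq_iff (hZ : IsMarkerSet D Z) {n z : ℤ} :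
    prevMarker Z n = z ↔ IsGreatest {m | m ∈ Z ∧ m ≤ n} z :=
  ⟨fun h => h ▸ hZ.isGreatest_prevMarker n, IsGreatest.csSup_eq⟩

lemma nextMarker_eq_iff (hZ : IsMarkerSet D Z) {n z : ℤ} :
    nextMarker Z n = z ↔ IsLeast {m | m ∈ Z ∧ n < m} z :=
  ⟨fun h => h ▸ hZ.isLeast_nextMarker n, IsLeast.csInf_eq⟩

lemma lt_nextMarker_sub_prevMarker (hZ : IsMarkerSet D Z) (n : ℤ) :
    (D : ℤ) < nextMarker Z n - prevMarker Z n := by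
  obtain ⟨⟨hz, hzn⟩, -⟩ := hZ.isGreatest_prevMarker n
  obtain ⟨⟨hz', hnz'⟩, -⟩ := hZ.isLeast_nextMarker n
  exact hZ.lt_sub _ hz _ hz' (by omega)

lemma concatColoring_add (hZ : IsMarkerSet D Z) {N : ℕ} (hND : N ≤ D) {w : ℤ → ℤ → α} {b : ℤ → α}
    (hw : ∀ g : ℤ, (D : ℤ) < g → ∀ i : ℤ, 0 ≤ i → i ≤ N → w g i = b i ∧ w g (g + i) = b i)
    (n : ℤ) {a : ℤ} (ha₀ : 0 ≤ a) (haN : a ≤ N) :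
    concatColoring Z w (n + a) = w (nextMarker Z n - prevMarker Z n) (n + a - prevMarker Z n) := by
  obtain ⟨⟨hz, hzn⟩, hzmax⟩ := hZ.isGreatest_prevMarker n
  obtain ⟨⟨hz', hnz'⟩, hz'min⟩ := hZ.isLeast_nextMarker n
  have hg := hZ.lt_nextMarker_sub_prevMarker n
  set z := prevMarker Z n
  set z' := nextMarker Z n
  rcases lt_or_ge (n + a) z' with h | h
  · have hprev : prevMarker Z (n + a) = z := hZ.prevMarker_eq_iff.2 ⟨⟨hz, by omega⟩,
      fun m ⟨hm, hma⟩ => (le_or_gt m n).elim (fun hmn => hzmax ⟨hm, hmn⟩)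
        fun hnm => absurd (hz'min ⟨hm, hnm⟩) (by omega)⟩
    have hnext : nextMarker Z (n + a) = z' :=
      hZ.nextMarker_eq_iff.2 ⟨⟨hz', h⟩, fun m ⟨hm, hma⟩ => hz'min ⟨hm, by omega⟩⟩
    rw [concatColoring, hprev, hnext]
  · have hprev : prevMarker Z (n + a) = z' := hZ.prevMarker_eq_iff.2 ⟨⟨hz', h⟩,
      fun m ⟨hm, hma⟩ => le_of_not_gt fun hlt => by
        have := hZ.lt_sub _ hz' _ hm hlt
        omega⟩
    have hg' := hZ.lt_nextMarker_sub_prevMarker (n + a)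
    rw [hprev] at hg'
    -- Past the next marker `z'` the new pattern starts with `b`, as the old one continues.
    rw [concatColoring, hprev, (hw _ hg' _ (by omega) (by omega)).1,
      ← (hw _ hg (n + a - z') (by omega) (by omega)).2]
    congr 1
    ring

theorem isProperColoration_concatColoring (hZ : IsMarkerSet D Z) {A : Finset ℕ} {N : ℕ}
    (hAN : ∀ a ∈ A, a ≤ N) (hND : N ≤ D) {w : ℤ → ℤ → α} {b : ℤ → α}
    (hw : ∀ g : ℤ, (D : ℤ) < g → IsProperColoration A (w g) ∧
      ∀ i : ℤ, 0 ≤ i → i ≤ N → w g i = b i ∧ w g (g + i) = b i) :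
    IsProperColoration A (concatColoring Z w) := by
  refine isProperColoration_iff_add.2 fun n a ha => ?_
  have hg := hZ.lt_nextMarker_sub_prevMarker n
  have := isProperColoration_iff_add.1 (hw _ hg).1 (n - prevMarker Z n) a ha
  rw [hZ.concatColoring_add hND (fun g hg => (hw g hg).2) n (by positivity)
    (by exact_mod_cast hAN a ha)]
  rwa [sub_add_eq_add_sub] at this

lemma prevMarker_preimage_add (hZ : IsMarkerSet D Z) (a n : ℤ) :
    prevMarker ((· + a) ⁻¹' Z) n = prevMarker Z (n + a) - a := by
  obtain ⟨⟨hz, hzn⟩, hmax⟩ := hZ.isGreatest_prevMarker (n + a)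
  refine IsGreatest.csSup_eq ⟨⟨by simpa using hz, by omega⟩, fun m ⟨hm, hmn⟩ => ?_⟩
  have := hmax (show m + a ∈ {z | z ∈ Z ∧ z ≤ n + a} from ⟨hm, by omega⟩)
  omega

lemma nextMarker_preimage_add (hZ : IsMarkerSet D Z) (a n : ℤ) :
    nextMarker ((· + a) ⁻¹' Z) n = nextMarker Z (n + a) - a := by
  obtain ⟨⟨hz, hnz⟩, hmin⟩ := hZ.isLeast_nextMarker (n + a)
  refine IsLeast.csInf_eq ⟨⟨by simpa using hz, by omega⟩, fun m ⟨hm, hmn⟩ => ?_⟩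
  have := hmin (show m + a ∈ {z | z ∈ Z ∧ n + a < z} from ⟨hm, by omega⟩)
  omega

lemma concatColoring_preimage_add (hZ : IsMarkerSet D Z) (w : ℤ → ℤ → α) (a n : ℤ) :
    concatColoring ((· + a) ⁻¹' Z) w n = concatColoring Z w (n + a) := by
  simp only [concatColoring, hZ.prevMarker_preimage_add, hZ.nextMarker_preimage_add]
  congr 1 <;> ring

end IsMarkerSet

end Markers

section BorelMarkers

variable {X ι : Type*}

def greedyStage (f : ι → X → X) (γ : X → ℕ) : ℕ → Set X
  | 0 => ∅
  | n + 1 => greedyStage f γ n ∪ {x | γ x = n ∧ ∀ i, f i x ∉ greedyStage f γ n}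

lemma mem_greedyStage {f : ι → X → X} {γ : X → ℕ} {x : X} {n : ℕ} :
    x ∈ greedyStage f γ n ↔ γ x < n ∧ ∀ i, f i x ∉ greedyStage f γ (γ x) := by
  induction n with
  | zero => simp [greedyStage]
  | succ n ih =>
    rw [greedyStage, mem_union, ih, mem_ofPred_eq]
    constructor
    · rintro (⟨h, hx⟩ | ⟨rfl, hx⟩) <;> exact ⟨by omega, hx⟩
    · rintro ⟨h, hx⟩
      rcases Nat.lt_succ_iff_lt_or_eq.1 h with h | rfl
      exacts [Or.inl ⟨h, hx⟩, Or.inr ⟨rfl, hx⟩]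

lemma measurableSet_greedyStage [MeasurableSpace X] [Countable ι] {f : ι → X → X}
    (hf : ∀ i, Measurable (f i)) {γ : X → ℕ} (hγ : Measurable γ) (n : ℕ) :
    MeasurableSet (greedyStage f γ n) := by
  induction n with
  | zero => exact .empty
  | succ n ih =>
    exact ih.union (measurableSet_setOfPred.2
      ((hγ.eq_const n).and (.forall fun i => (ih.mem.comp (hf i)).not)))

theorem exists_measurableSet_maximal_independent [MeasurableSpace X] [Countable ι]
    {f : ι → X → X} (hf : ∀ i, Measurable (f i)) (hsymm : ∀ i x, ∃ j, f j (f i x) = x)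
    {γ : X → ℕ} (hγ : Measurable γ) (hγf : ∀ i x, γ (f i x) ≠ γ x) :
    ∃ M : Set X, MeasurableSet M ∧ (∀ x ∈ M, ∀ i, f i x ∉ M) ∧ ∀ x ∉ M, ∃ i, f i x ∈ M := by
  have hM : ∀ x, x ∈ ⋃ n, greedyStage f γ n ↔ ∀ i, f i x ∉ greedyStage f γ (γ x) := fun x => by
    rw [mem_iUnion]
    exact ⟨fun ⟨_, hn⟩ => (mem_greedyStage.1 hn).2,
      fun h => ⟨γ x + 1, mem_greedyStage.2 ⟨by omega, h⟩⟩⟩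
  refine ⟨⋃ n, greedyStage f γ n, .iUnion (measurableSet_greedyStage hf hγ),
    fun x hx i hix => ?_, fun x hx => ?_⟩
  · obtain ⟨j, hj⟩ := hsymm i x
    rcases (hγf i x).lt_or_gt with h | h
    · exact (hM x).1 hx i (mem_greedyStage.2 ⟨h, (hM _).1 hix⟩)
    · have : x ∈ greedyStage f γ (γ (f i x)) := mem_greedyStage.2 ⟨h, (hM x).1 hx⟩
      exact (hM _).1 hix j (by rwa [hj])
  · obtain ⟨i, hi⟩ := not_forall_not.1 ((hM x).not.1 hx)
    exact ⟨i, mem_iUnion.2 ⟨_, hi⟩⟩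

theorem exists_measurable_nat_coloring [TopologicalSpace X] [SecondCountableTopology X]
    [T1Space X] [MeasurableSpace X] [OpensMeasurableSpace X] [Finite ι] {f : ι → X → X}
    (hf : ∀ i, Measurable (f i)) (hfix : ∀ i x, f i x ≠ x) :
    ∃ γ : X → ℕ, Measurable γ ∧ ∀ i x, γ (f i x) ≠ γ x := by
  classical
  obtain ⟨e, he⟩ :=
    countable_iff_exists_subset_range.1 (TopologicalSpace.countable_countableBasis X)
  have hsep : ∀ x, ∃ n, IsOpen (e n) ∧ x ∈ e n ∧ ∀ i, f i x ∉ e n := fun x => by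
    obtain ⟨v, hv, hxv, hvsub⟩ :=
      (TopologicalSpace.isBasis_countableBasis X).exists_subset_of_mem_open
        (fun ⟨i, hi⟩ => hfix i x hi) (finite_range fun i => f i x).isClosed.isOpen_compl
    obtain ⟨n, rfl⟩ := he hv
    exact ⟨n, TopologicalSpace.isOpen_of_mem_countableBasis hv, hxv,
      fun i hi => hvsub hi ⟨i, rfl⟩⟩
  refine ⟨fun x => Nat.find (hsep x), measurable_find hsep fun n => ?_, fun i x h => ?_⟩
  · by_cases hn : IsOpen (e n)
    · exact measurableSet_setOfPred.2 (measurable_const.and (hn.measurableSet.mem.and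
        (.forall fun i => (hn.measurableSet.mem.comp (hf i)).not)))
    · simp [hn]
  · have hmem := (Nat.find_spec (hsep (f i x))).2.1
    rw [show Nat.find (hsep (f i x)) = Nat.find (hsep x) from h] at hmem
    exact (Nat.find_spec (hsep x)).2.2 i hmem

variable [AddAction ℤ X] [MeasurableSpace X] [MeasurableConstVAdd ℤ X]

theorem exists_measurableSet_isMarkerSet [TopologicalSpace X] [SecondCountableTopology X]
    [T1Space X] [OpensMeasurableSpace X] (hfree : ∀ t : ℤ, t ≠ 0 → ∀ x : X, t +ᵥ x ≠ x)
    (D : ℕ) : ∃ M : Set X, MeasurableSet M ∧ ∀ x, IsMarkerSet D {n : ℤ | n +ᵥ x ∈ M} := by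
  let T : Finset ℤ := (Finset.Icc (-(D : ℤ)) D).erase 0
  have hT : ∀ t : ℤ, t ∈ T ↔ t ≠ 0 ∧ -(D : ℤ) ≤ t ∧ t ≤ D := by simp [T]
  let f : T → X → X := fun t x => (t : ℤ) +ᵥ x
  have hf : ∀ t, Measurable (f t) := fun t => measurable_const_vadd _
  obtain ⟨γ, hγ, hγf⟩ := exists_measurable_nat_coloring hf fun t => hfree t ((hT t).1 t.2).1
  obtain ⟨M, hM, hindep, hmax⟩ := exists_measurableSet_maximal_independent hf
    (fun t x => ⟨⟨-t, (hT _).2 (by have := (hT t).1 t.2; omega)⟩, by simp [f, vadd_vadd]⟩)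
    hγ hγf
  have hnear : ∀ x, ∃ t : ℤ, -(D : ℤ) ≤ t ∧ t ≤ D ∧ t +ᵥ x ∈ M := fun x => by
    by_cases hx : x ∈ M
    · exact ⟨0, by omega, by omega, by rwa [zero_vadd]⟩
    · obtain ⟨t, ht⟩ := hmax x hx
      have := (hT t).1 t.2
      exact ⟨t, by omega, by omega, ht⟩
  refine ⟨M, hM, fun x => ⟨fun n => ?_, fun n => ?_, fun z hz z' hz' hlt => ?_⟩⟩
  · obtain ⟨t, ht, ht', htM⟩ := hnear ((n - D) +ᵥ x)
    exact ⟨t + (n - D), by simpa [vadd_vadd] using htM, by omega⟩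
  · obtain ⟨t, ht, ht', htM⟩ := hnear ((n + D + 1) +ᵥ x)
    exact ⟨t + (n + D + 1), by simpa [vadd_vadd] using htM, by omega⟩
  · by_contra! hle
    exact hindep _ hz ⟨z' - z, (hT _).2 ⟨by omega, by omega, hle⟩⟩
      (by simpa [f, vadd_vadd] using hz')

lemma measurable_prevMarker_vadd {D : ℕ} {M : Set X} (hM : MeasurableSet M)
    (hZ : ∀ x, IsMarkerSet D {m : ℤ | m +ᵥ x ∈ M}) (n : ℤ) :
    Measurable fun x => prevMarker {m : ℤ | m +ᵥ x ∈ M} n := by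
  have hmem : ∀ m : ℤ, Measurable fun x : X => m +ᵥ x ∈ M :=
    fun m => (hM.preimage (measurable_const_vadd m)).mem
  refine measurable_to_countable' fun z => ?_
  simp only [preimage, mem_singleton_iff, (hZ _).prevMarker_eq_iff, IsGreatest, upperBounds,
    mem_ofPred_eq]
  exact measurableSet_setOfPred.2 (by fun_prop)

lemma measurable_nextMarker_vadd {D : ℕ} {M : Set X} (hM : MeasurableSet M)
    (hZ : ∀ x, IsMarkerSet D {m : ℤ | m +ᵥ x ∈ M}) (n : ℤ) :
    Measurable fun x => nextMarker {m : ℤ | m +ᵥ x ∈ M} n := by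
  have hmem : ∀ m : ℤ, Measurable fun x : X => m +ᵥ x ∈ M :=
    fun m => (hM.preimage (measurable_const_vadd m)).mem
  refine measurable_to_countable' fun z => ?_
  simp only [preimage, mem_singleton_iff, (hZ _).nextMarker_eq_iff, IsLeast, lowerBounds,
    mem_ofPred_eq]
  exact measurableSet_setOfPred.2 (by fun_prop)

theorem exists_measurable_coloring_of_gap_patterns [TopologicalSpace X]
    [SecondCountableTopology X] [T1Space X] [OpensMeasurableSpace X]
    (hfree : ∀ t : ℤ, t ≠ 0 → ∀ x : X, t +ᵥ x ≠ x) {α : Type*} [MeasurableSpace α]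
    {A : Finset ℕ} {N D : ℕ} (hAN : ∀ a ∈ A, a ≤ N) (hND : N ≤ D) {w : ℤ → ℤ → α} {b : ℤ → α}
    (hw : ∀ g : ℤ, (D : ℤ) < g → IsProperColoration A (w g) ∧
      ∀ i : ℤ, 0 ≤ i → i ≤ N → w g i = b i ∧ w g (g + i) = b i) :
    ∃ c : X → α, Measurable c ∧ ∀ x, ∀ a ∈ A, c ((a : ℤ) +ᵥ x) ≠ c x := by
  obtain ⟨M, hM, hZ⟩ := exists_measurableSet_isMarkerSet hfree D
  refine ⟨fun x => concatColoring {m : ℤ | m +ᵥ x ∈ M} w 0,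
    (measurable_of_countable fun z : ℤ × ℤ => w (z.2 - z.1) (0 - z.1)).comp
      ((measurable_prevMarker_vadd hM hZ 0).prodMk (measurable_nextMarker_vadd hM hZ 0)),
    fun x a ha => ?_⟩
  have hshift : {m : ℤ | m +ᵥ (a : ℤ) +ᵥ x ∈ M} = (· + (a : ℤ)) ⁻¹' {m : ℤ | m +ᵥ x ∈ M} := by
    ext m
    simp [vadd_vadd]
  have := isProperColoration_iff_add.1
    ((hZ x).isProperColoration_concatColoring hAN hND hw) 0 a ha
  simp only [hshift, (hZ x).concatColoring_preimage_add]
  exact this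

end BorelMarkers

theorem borel_coloring_iff_two_periodic_colorations_general
    (A : Finset ℕ) (hA : A.Nonempty) (k : ℕ) :
    (∃ c : {x : ℤ → Bool // x ∈ FreePart} → Fin k, IsBorelColoring A c) ↔
    (∃ p q : ℕ, A.max' hA + 1 < p ∧ A.max' hA + 1 < q ∧ Nat.gcd p q = 1 ∧
      ∃ y₁ y₂ : ℤ → Fin k,
        (∀ m : ℤ, y₁ (m + (p : ℤ)) = y₁ m) ∧
        (∀ m : ℤ, y₂ (m + (q : ℤ)) = y₂ m) ∧
        (∀ m m' : ℤ, (m - m').natAbs ∈ A → y₁ m ≠ y₁ m') ∧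
        (∀ m m' : ℤ, (m - m').natAbs ∈ A → y₂ m ≠ y₂ m') ∧
        (∀ i : ℕ, i ≤ A.max' hA → y₁ (i : ℤ) = y₂ (i : ℤ))) := by
  have hAN : ∀ a ∈ A, a ≤ A.max' hA := fun a ha => A.le_max' a ha
  constructor
  · rintro ⟨c, hc⟩
    obtain ⟨L, hL⟩ := hc.exists_periodic_colorations hAN
    set t := max L (A.max' hA + 1) + 1
    obtain ⟨y₁, y₂, h⟩ := hL t (t + 1) (by omega) (by omega)
    exact ⟨t, t + 1, by omega, by omega, Nat.coprime_self_add_right.2 (Nat.coprime_one_right t),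
      y₁, y₂, h⟩
  · rintro ⟨p, q, -, -, hpq, y₁, y₂, hy₁, hy₂, hy₁A, hy₂A, hy⟩
    obtain ⟨w, hw⟩ := exists_gap_patterns hAN hpq hy₁ hy₂ hy₁A hy₂A hy
    obtain ⟨c, hcm, hc⟩ := exists_measurable_coloring_of_gap_patterns
      (fun t ht x => vadd_ne_self_of_ne_zero ht x) hAN (Nat.le_add_left _ (p * q))
      fun g hg => hw g (by push_cast at hg; omega)
    exact ⟨c, hcm, fun x a ha _ => (hc x a ha).symm⟩

/-- For `S = {±a : a ∈ A}` and `k ≥ 1`, there is a Borel proper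
`k`-coloring of `G_S` on `F(2^ℤ)` iff there are `p, q > max A + 1` with `gcd(p,q) = 1`
and `p`- resp. `q`-periodic proper `S`-colorations `y₁, y₂ : ℤ → Fin k`
agreeing on `{0, …, max A}`. -/
theorem borel_coloring_iff_two_periodic_colorations
    (A : Finset ℕ) (hA : A.Nonempty) (hpos : ∀ a ∈ A, 0 < a) (hgcd : A.gcd id = 1)
    (k : ℕ) (hk : 1 ≤ k) :
    (∃ c : {x : ℤ → Bool // x ∈ FreePart} → Fin k, IsBorelColoring A c) ↔
    (∃ p q : ℕ, A.max' hA + 1 < p ∧ A.max' hA + 1 < q ∧ Nat.gcd p q = 1 ∧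
      ∃ y₁ y₂ : ℤ → Fin k,
        (∀ m : ℤ, y₁ (m + (p : ℤ)) = y₁ m) ∧
        (∀ m : ℤ, y₂ (m + (q : ℤ)) = y₂ m) ∧
        (∀ m m' : ℤ, (m - m').natAbs ∈ A → y₁ m ≠ y₁ m') ∧
        (∀ m m' : ℤ, (m - m').natAbs ∈ A → y₂ m ≠ y₂ m') ∧
        (∀ i : ℕ, i ≤ A.max' hA → y₁ (i : ℤ) = y₂ (i : ℤ))) :=
  borel_coloring_iff_two_periodic_colorations_general A hA k
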